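/- Let P be a finite bounded poset with a CL-labeling λ and let m be a maximal chain of P. Then the number of maximal chains m' of P such that m' is covered by m in the maximal chain descent order C(P,λ) is at most the number of descents of m with respect to λ. Moreover, if λ is polygon complete, then the number of maximal chains covered by m in C(P,λ) is exactly the number of descents of m with respect to λ. -/

import Mathlib

/-- A maximal chain of a bounded poset `P`, recorded as a saturated chain
(a list of elements whose consecutive entries are covers) from `⊥` to `⊤`. -/
structure MaxChain (P : Type*) [PartialOrder P] [BoundedOrder P] where
  elems : List P
  chain' : elems.Chain' (· ⋖ ·)
  head_bot : elems.head? = some ⊥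
  last_top : elems.getLast? = some ⊤

variable {P : Type*} [PartialOrder P] [BoundedOrder P] [DecidableEq P]
variable {Λ : Type*} [PartialOrder Λ]

/-- `lab` is a chain-edge labeling: the label of edge `j` (the edge between
positions `j` and `j+1` of the chain, `0`-indexed) depends only on the
bottom part of the chain below that edge. -/
def IsChainEdgeLabeling (lab : MaxChain P → ℕ → Λ) : Prop :=
  ∀ m m' : MaxChain P, ∀ i : ℕ,
    m.elems.take (i + 1) = m'.elems.take (i + 1) → ∀ j, j < i → lab m j = lab m' j

/-- `r` is a root: a saturated chain from `⊥` to `x`. -/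
def IsRootTo (r : List P) (x : P) : Prop :=
  r.Chain' (· ⋖ ·) ∧ r.head? = some (⊥ : P) ∧ r.getLast? = some x

/-- `c` is a saturated chain from `x` to `y`. -/
def IsSatChain (c : List P) (x y : P) : Prop :=
  c.Chain' (· ⋖ ·) ∧ c.head? = some x ∧ c.getLast? = some y

/-- The maximal chain `m` lies in the rooted interval `[x,y]_r`, i.e. it begins
with the root `r` (whose last entry is `x`) and passes through `y`. -/
def InRooted (m : MaxChain P) (r : List P) (y : P) : Prop :=
  m.elems.take r.length = r ∧ y ∈ m.elems

/-- The labels of `m` weakly ascend along the edges `i, i+1, …, j-1`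
(the edges of the restriction of `m` between positions `i` and `j`). -/
def RestrAscending (lab : MaxChain P → ℕ → Λ) (m : MaxChain P) (i j : ℕ) : Prop :=
  ∀ k, i ≤ k → k + 2 ≤ j → lab m k ≤ lab m (k + 1)

/-- The restriction of the maximal chain `m` to the rooted interval `[x,y]_r`,
where `x` is the top of the root `r`. -/
def restrictChain (m : MaxChain P) (r : List P) (y : P) : List P :=
  (m.elems.take (m.elems.idxOf y + 1)).drop (r.length - 1)

/-- The label sequence of `m` along edges `i, i+1, …, j-1`. -/
def restrLabels (lab : MaxChain P → ℕ → Λ) (m : MaxChain P) (i j : ℕ) : List Λ :=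
  (List.range (j - i)).map fun k => lab m (i + k)

/-- The CL condition for the rooted interval with root `r` and top `y`:
there is an ascending maximal chain of the rooted interval, any two ascending
ones coincide, and the ascending one lexicographically strictly precedes every
other maximal chain of the rooted interval. -/
def CLAt (lab : MaxChain P → ℕ → Λ) (r : List P) (y : P) : Prop :=
  (∃ m : MaxChain P, InRooted m r y ∧
      RestrAscending lab m (r.length - 1) (m.elems.idxOf y)) ∧
  (∀ m m' : MaxChain P, InRooted m r y → InRooted m' r y →
      RestrAscending lab m (r.length - 1) (m.elems.idxOf y) →
      RestrAscending lab m' (r.length - 1) (m'.elems.idxOf y) →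
      restrictChain m r y = restrictChain m' r y) ∧
  (∀ m m' : MaxChain P, InRooted m r y → InRooted m' r y →
      RestrAscending lab m (r.length - 1) (m.elems.idxOf y) →
      restrictChain m r y ≠ restrictChain m' r y →
      List.Lex (· < ·) (restrLabels lab m (r.length - 1) (m.elems.idxOf y))
        (restrLabels lab m' (r.length - 1) (m'.elems.idxOf y)))

/-- `lab` is a CL-labeling: it is a chain-edge labeling and every rooted
interval has a unique ascending maximal chain which lexicographically strictly
precedes all other maximal chains of that rooted interval. -/
def IsCLLabeling (lab : MaxChain P → ℕ → Λ) : Prop :=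
  IsChainEdgeLabeling lab ∧
  ∀ (r : List P) (x y : P), IsRootTo r x → x < y → CLAt lab r y

/-- `m` increases by a polygon move to `m'`: they differ by a polygon over some
interval `[x,y]` (with `m' ∩ (x,y) = {w}` a single new element), the part of `m`
in `[x,y]` is ascending (hence, for a CL-labeling, it is the unique ascending
chain of the rooted interval), and `x ⋖ w ⋖ y` is a descent at `w`. -/
def PolygonMove (lab : MaxChain P → ℕ → Λ) (m m' : MaxChain P) : Prop :=
  ∃ (a c b : List P) (x w y : P),
    m.elems = a ++ x :: (c ++ y :: b) ∧
    m'.elems = a ++ x :: w :: y :: b ∧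
    c ≠ [] ∧ w ∉ c ∧
    RestrAscending lab m a.length (a.length + c.length + 1) ∧
    ¬ lab m' a.length ≤ lab m' (a.length + 1)

/-- The maximal chain descent order `C(P,λ)`: the reflexive–transitive closure
of increase by polygon moves. -/
def CDLe (lab : MaxChain P → ℕ → Λ) (m m' : MaxChain P) : Prop :=
  Relation.ReflTransGen (PolygonMove lab) m m'

/-- Strict order of the maximal chain descent order. -/
def CDLt (lab : MaxChain P → ℕ → Λ) (m m' : MaxChain P) : Prop :=
  CDLe lab m m' ∧ m ≠ m'

/-- `m'` covers `m` in the maximal chain descent order. -/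
def CDCovBy (lab : MaxChain P → ℕ → Λ) (m m' : MaxChain P) : Prop :=
  CDLt lab m m' ∧ ∀ z : MaxChain P, CDLt lab m z → ¬ CDLt lab z m'

/-- `lab` is polygon complete: every polygon move gives a cover relation. -/
def PolygonComplete (lab : MaxChain P → ℕ → Λ) : Prop :=
  ∀ m m' : MaxChain P, PolygonMove lab m m' → CDCovBy lab m m'

/-- `m` has a descent at its (interior) position `i`. -/
def DescentAt (lab : MaxChain P → ℕ → Λ) (m : MaxChain P) (i : ℕ) : Prop :=
  0 < i ∧ i + 1 < m.elems.length ∧ ¬ lab m (i - 1) ≤ lab m i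

/-- `m` has a descent at its interior element `z`. -/
def DescentElem (lab : MaxChain P → ℕ → Λ) (m : MaxChain P) (z : P) : Prop :=
  ∃ i : ℕ, m.elems[i]? = some z ∧ DescentAt lab m i

/-- `m` has a descending label sequence: a descent at every interior element. -/
def DescendingMC (lab : MaxChain P → ℕ → Λ) (m : MaxChain P) : Prop :=
  ∀ i : ℕ, 0 < i → i + 1 < m.elems.length → ¬ lab m (i - 1) ≤ lab m i

/-- `m` has an ascending (weakly increasing) label sequence. -/
def AscendingMC (lab : MaxChain P → ℕ → Λ) (m : MaxChain P) : Prop :=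
  ∀ i : ℕ, i + 3 ≤ m.elems.length → lab m i ≤ lab m (i + 1)


section Helpers
set_option linter.unusedSectionVars false

theorem MaxChain.ext' {m m' : MaxChain P} (h : m.elems = m'.elems) : m = m' := by
  cases m; cases m'; simpa using h

theorem mc_pairwise (m : MaxChain P) : m.elems.Pairwise (· < ·) :=
  List.isChain_iff_pairwise.mp (m.chain'.imp fun _ _ h => h.lt)

theorem mc_nodup (m : MaxChain P) : m.elems.Nodup :=
  (mc_pairwise m).imp ne_of_lt

/-- first difference position -/
noncomputable def fdiff (m m' : MaxChain P) : ℕ :=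
  sInf {j | m.elems[j]? ≠ m'.elems[j]?}

theorem fdiff_eq {m' m : MaxChain P} {a c b : List P} {x w y : P}
    (h1 : m'.elems = a ++ x :: (c ++ y :: b)) (h2 : m.elems = a ++ x :: w :: y :: b)
    (hc : c ≠ []) (hw : w ∉ c) : fdiff m m' = a.length + 1 := by
  obtain ⟨ch, ct, rfl⟩ : ∃ ch ct, c = ch :: ct := by
    cases c with
    | nil => exact absurd rfl hc
    | cons ch ct => exact ⟨ch, ct, rfl⟩
  have hmem : a.length + 1 ∈ {j | m.elems[j]? ≠ m'.elems[j]?} := by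
    have e1 : m.elems[a.length + 1]? = some w := by
      rw [h2, List.getElem?_append_right (by omega)]
      simp
    have e2 : m'.elems[a.length + 1]? = some ch := by
      rw [h1, List.getElem?_append_right (by omega)]
      simp
    simp only [Set.mem_setOf_eq, e1, e2]
    intro hcon
    exact hw (by simp [Option.some_inj.mp hcon])
  apply le_antisymm (Nat.sInf_le hmem)
  refine le_csInf ⟨_, hmem⟩ (fun j hj => ?_)
  by_contra hlt
  push_neg at hlt
  have hj' : j < (a ++ [x]).length := by simp; omega
  have e1 : m.elems[j]? = (a ++ [x])[j]? := by
    rw [h2, show a ++ x :: w :: y :: b = (a ++ [x]) ++ (w :: y :: b) by simp,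
      List.getElem?_append_left hj']
  have e2 : m'.elems[j]? = (a ++ [x])[j]? := by
    rw [h1, show a ++ x :: ((ch :: ct) ++ y :: b) = (a ++ [x]) ++ ((ch :: ct) ++ y :: b) by simp,
      List.getElem?_append_left hj']
  exact hj (e1.trans e2.symm)


theorem move_ne {lab : MaxChain P → ℕ → Λ} {m₁ m₂ : MaxChain P}
    (h : PolygonMove lab m₁ m₂) : m₁ ≠ m₂ := by
  obtain ⟨a, c, b, x, w, y, h1, h2, hc, hw, -, -⟩ := h
  intro he
  rw [he, h2] at h1
  replace h2 := h1.symm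
  have := List.append_cancel_left h2
  obtain ⟨ch, ct, rfl⟩ : ∃ ch ct, c = ch :: ct := by
    cases c with
    | nil => exact absurd rfl hc
    | cons ch ct => exact ⟨ch, ct, rfl⟩
  simp only [List.cons_append, List.cons.injEq] at this
  exact hw (by simp [this.2.1])

theorem cover_move {lab : MaxChain P → ℕ → Λ} {m' m : MaxChain P}
    (h : CDCovBy lab m' m) : PolygonMove lab m' m := by
  obtain ⟨⟨hle, hne⟩, hcov⟩ := h
  rcases hle.cases_head with rfl | ⟨z, hz, hzm⟩
  · exact absurd rfl hne
  · by_cases hzm' : z = m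
    · exact hzm' ▸ hz
    · exact absurd ⟨hzm, hzm'⟩ (hcov z ⟨Relation.ReflTransGen.single hz, move_ne hz⟩)

theorem move_descent {lab : MaxChain P → ℕ → Λ} {m' m : MaxChain P}
    (h : PolygonMove lab m' m) : DescentAt lab m (fdiff m m') := by
  obtain ⟨a, c, b, x, w, y, h1, h2, hc, hw, -, hdes⟩ := h
  rw [fdiff_eq h1 h2 hc hw]
  refine ⟨Nat.succ_pos _, ?_, by simpa using hdes⟩
  rw [h2]; simp; omega


theorem head?_append_cons (a : List P) (x : P) (l l' : List P) :
    (a ++ x :: l).head? = (a ++ x :: l').head? := by cases a <;> simp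

theorem chain_facts {lab : MaxChain P → ℕ → Λ} {mk : MaxChain P} {a c b : List P} {x y : P}
    (ek : mk.elems = a ++ x :: (c ++ y :: b))
    (hasc : RestrAscending lab mk a.length (a.length + c.length + 1)) :
    InRooted mk (a ++ [x]) y ∧ mk.elems.idxOf y = a.length + c.length + 1 ∧
    RestrAscending lab mk ((a ++ [x]).length - 1) (mk.elems.idxOf y) ∧
    restrictChain mk (a ++ [x]) y = x :: (c ++ [y]) := by
  have hsplit : mk.elems = (a ++ x :: c) ++ (y :: b) := by simp [ek]
  have hpw := mc_pairwise mk
  rw [hsplit] at hpw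
  have hy_not : y ∉ a ++ x :: c := fun hy =>
    lt_irrefl y ((List.pairwise_append.mp hpw).2.2 y hy y (List.mem_cons_self))
  have hidx : mk.elems.idxOf y = a.length + c.length + 1 := by
    rw [hsplit, List.idxOf_append_of_notMem hy_not, List.idxOf_cons_self]
    simp only [List.length_append, List.length_cons]; omega
  have hrl : (a ++ [x]).length = a.length + 1 := by simp
  have htake : mk.elems.take (a ++ [x]).length = a ++ [x] := by
    rw [show mk.elems = (a ++ [x]) ++ (c ++ y :: b) by simp [ek], List.take_left]
  have hres : restrictChain mk (a ++ [x]) y = x :: (c ++ [y]) := by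
    unfold restrictChain
    rw [hidx, hrl]
    rw [show mk.elems = (a ++ x :: (c ++ [y])) ++ b by simp [ek],
      List.take_left' (by simp only [List.length_append, List.length_cons, List.length_nil]; omega),
      Nat.add_sub_cancel,
      show a ++ x :: (c ++ [y]) = a ++ (x :: (c ++ [y])) from rfl, List.drop_left]
  refine ⟨⟨htake, by simp [ek]⟩, hidx, ?_, hres⟩
  rw [hidx, hrl]
  simpa using hasc

theorem move_unique {lab : MaxChain P → ℕ → Λ} (hCL : IsCLLabeling lab) {m₁ m₂ m : MaxChain P}
    (h1 : PolygonMove lab m₁ m) (h2 : PolygonMove lab m₂ m)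
    (hf : fdiff m m₁ = fdiff m m₂) : m₁ = m₂ := by
  obtain ⟨a₁, c₁, b₁, x₁, w₁, y₁, e1, e1', hc1, hw1, hasc1, -⟩ := h1
  obtain ⟨a₂, c₂, b₂, x₂, w₂, y₂, e2, e2', hc2, hw2, hasc2, -⟩ := h2
  rw [fdiff_eq e1 e1' hc1 hw1, fdiff_eq e2 e2' hc2 hw2] at hf
  obtain ⟨rfl, heq⟩ := List.append_inj (e1'.symm.trans e2') (by omega)
  obtain ⟨rfl, rfl, rfl, rfl⟩ : x₁ = x₂ ∧ w₁ = w₂ ∧ y₁ = y₂ ∧ b₁ = b₂ := by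
    simpa using heq
  have hch : List.Chain' (· ⋖ ·) (x₁ :: w₁ :: y₁ :: b₁) := by
    have := m.chain'; rw [e1'] at this
    exact (List.isChain_append.mp this).2.1
  have hxw := (List.isChain_cons_cons.mp hch).1
  have hwy := (List.isChain_cons_cons.mp (List.isChain_cons_cons.mp hch).2).1
  have hroot : IsRootTo (a₁ ++ [x₁]) x₁ := by
    refine ⟨?_, ?_, by simp⟩
    · have := m.chain'
      rw [e1', show a₁ ++ x₁ :: w₁ :: y₁ :: b₁ = (a₁ ++ [x₁]) ++ (w₁ :: y₁ :: b₁) by simp] at this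
      exact (List.isChain_append.mp this).1
    · rw [show (a₁ ++ [x₁]) = a₁ ++ x₁ :: ([] : List P) from rfl,
        head?_append_cons a₁ x₁ [] (w₁ :: y₁ :: b₁), ← e1']
      exact m.head_bot
  obtain ⟨-, huniq, -⟩ := hCL.2 (a₁ ++ [x₁]) x₁ y₁ hroot (hxw.lt.trans hwy.lt)
  obtain ⟨hin1, hidx1, hra1, hres1⟩ := chain_facts e1 hasc1
  obtain ⟨hin2, hidx2, hra2, hres2⟩ := chain_facts e2 hasc2
  have hre := huniq m₁ m₂ hin1 hin2 hra1 hra2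
  rw [hres1, hres2] at hre
  have hc : c₁ = c₂ := by simpa using hre
  exact MaxChain.ext' (by rw [e1, e2, hc])


theorem chain'_getElem? {l : List P} (h : l.Chain' (· ⋖ ·)) {k : ℕ} {u v : P}
    (hu : l[k]? = some u) (hv : l[k + 1]? = some v) : u ⋖ v := by
  have hk1 : k + 1 < l.length := by
    by_contra h'
    rw [List.getElem?_eq_none (by omega)] at hv
    simp at hv
  have hchain := List.isChain_iff_getElem.mp h k (by omega)
  rw [List.getElem?_eq_getElem (by omega), Option.some_inj] at hu
  rw [List.getElem?_eq_getElem (by omega), Option.some_inj] at hv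
  simpa [List.get_eq_getElem, hu, hv] using hchain

theorem descent_move {lab : MaxChain P → ℕ → Λ} (hCL : IsCLLabeling lab) {m : MaxChain P} {i : ℕ}
    (h : DescentAt lab m i) : ∃ m', PolygonMove lab m' m ∧ fdiff m m' = i := by
  obtain ⟨hi0, hilen, hdes⟩ := h
  obtain ⟨j, rfl⟩ : ∃ j, i = j + 1 := ⟨i - 1, by omega⟩
  have hj2 : j + 2 < m.elems.length := hilen
  set a : List P := m.elems.take j with ha
  set x : P := m.elems[j]'(by omega) with hx
  set w : P := m.elems[j + 1]'(by omega) with hw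
  set y : P := m.elems[j + 2]'(by omega) with hy
  set b : List P := m.elems.drop (j + 3) with hb
  have hal : a.length = j := by rw [ha, List.length_take]; omega
  have hm : m.elems = a ++ x :: w :: y :: b := by
    conv_lhs => rw [← List.take_append_drop j m.elems]
    rw [List.drop_eq_getElem_cons (show j < m.elems.length by omega),
      List.drop_eq_getElem_cons (show j + 1 < m.elems.length by omega),
      List.drop_eq_getElem_cons (show j + 2 < m.elems.length by omega)]
  have hxq : m.elems[j]? = some x := List.getElem?_eq_getElem _
  have hwq : m.elems[j + 1]? = some w := List.getElem?_eq_getElem _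
  have hyq : m.elems[j + 2]? = some y := List.getElem?_eq_getElem _
  have hxw : x ⋖ w := chain'_getElem? m.chain' hxq hwq
  have hwy : w ⋖ y := chain'_getElem? m.chain' hwq hyq
  have hxy : x < y := hxw.lt.trans hwy.lt
  set r : List P := a ++ [x] with hr
  have hrlen : r.length = j + 1 := by rw [hr, List.length_append, hal]; rfl
  have hroot : IsRootTo r x := by
    refine ⟨?_, ?_, by rw [hr]; simp⟩
    · have hch := m.chain'
      rw [hm, show a ++ x :: w :: y :: b = r ++ (w :: y :: b) by rw [hr]; simp] at hch
      exact (List.isChain_append.mp hch).1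
    · rw [hr, show a ++ [x] = a ++ x :: ([] : List P) from rfl,
        head?_append_cons a x [] (w :: y :: b), ← hm]
      exact m.head_bot
  obtain ⟨⟨ma, ⟨hma_take, hma_mem⟩, hma_asc⟩, -, -⟩ := hCL.2 r x y hroot hxy
  rw [hrlen] at hma_take
  set p := ma.elems.idxOf y with hp
  have hplen : p < ma.elems.length := List.idxOf_lt_length_iff.mpr hma_mem
  have hpy : ma.elems[p]? = some y := by
    rw [List.getElem?_eq_getElem hplen, List.getElem_idxOf hplen]
  have hma_len : j + 1 ≤ ma.elems.length := by
    have h' := congrArg List.length hma_take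
    rw [List.length_take, hrlen] at h'
    omega
  have hk_eq : ∀ k, k < j + 1 → ma.elems[k]? = r[k]? := by
    intro k hk
    rw [← hma_take, List.getElem?_take, if_pos hk]
  have hrel : ∀ z ∈ r, z < y := by
    intro z hz
    rw [hr] at hz
    rcases List.mem_append.mp hz with hz | hz
    · have hpw := mc_pairwise m
      rw [hm] at hpw
      exact (List.pairwise_append.mp hpw).2.2 z hz y (by simp)
    · rw [List.mem_singleton.mp hz]; exact hxy
  have hmaj : ma.elems[j]? = some x := by
    rw [hk_eq j (by omega), hr, ← hal, List.getElem?_append_right (le_refl _)]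
    simp
  have hpge : j + 2 ≤ p := by
    rcases Nat.lt_or_ge p (j + 1) with hple | hpe
    · exfalso
      have hq := hk_eq p hple
      rw [hpy] at hq
      have hyr : y ∈ r := by
        have : r[p]? = some y := hq.symm
        exact List.mem_of_getElem? this
      exact lt_irrefl y (hrel y hyr)
    · rcases Nat.lt_or_ge p (j + 2) with hple | hpe2
      · exfalso
        have hpe' : p = j + 1 := by omega
        rw [hpe'] at hpy
        have hcv : x ⋖ y := chain'_getElem? ma.chain' hmaj hpy
        exact hcv.2 hxw.lt hwy.lt
      · exact hpe2
  set c : List P := (ma.elems.take p).drop (j + 1) with hc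
  have hclen : c.length = p - (j + 1) := by
    rw [hc, List.length_drop, List.length_take]; omega
  have htkp : ma.elems.take p = r ++ c := by
    conv_lhs => rw [← List.take_append_drop (j + 1) (ma.elems.take p)]
    rw [List.take_take, min_eq_left (by omega), hma_take, hc]
  have htkp1 : ma.elems.take (p + 1) = r ++ c ++ [y] := by
    rw [List.take_succ, htkp, hpy]
    rfl
  set E : List P := ma.elems.take (p + 1) ++ m.elems.drop (j + 3) with hE
  have hEeq : E = a ++ x :: (c ++ y :: b) := by
    rw [hE, htkp1, hr, ← hb]; simp
  have hchE : E.Chain' (· ⋖ ·) := by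
    rw [hE]
    apply List.isChain_append.mpr
    refine ⟨ma.chain'.take _, m.chain'.drop _, ?_⟩
    intro u hu v hv
    rw [htkp1, List.getLast?_concat, Option.mem_some_iff] at hu
    rw [List.head?_drop, Option.mem_def] at hv
    rw [← hu]
    exact chain'_getElem? m.chain' hyq hv
  have hEhead : E.head? = some ⊥ := by
    rw [hEeq, head?_append_cons a x (c ++ y :: b) (w :: y :: b), ← hm]
    exact m.head_bot
  have hElast : E.getLast? = some ⊤ := by
    have he : E.getLast? = m.elems.getLast? := by
      rw [hEeq, hm, show a ++ x :: (c ++ y :: b) = (a ++ x :: c) ++ (y :: b) by simp,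
        show a ++ x :: w :: y :: b = (a ++ [x, w]) ++ (y :: b) by simp,
        List.getLast?_append_cons, List.getLast?_append_cons]
    rw [he]; exact m.last_top
  set m' : MaxChain P := ⟨E, hchE, hEhead, hElast⟩ with hm'
  have hm'elems : m'.elems = E := rfl
  have hcne : c ≠ [] := by
    intro h0
    rw [h0] at hclen
    simp at hclen
    omega
  have hm'take : m'.elems.take (p + 1) = ma.elems.take (p + 1) := by
    rw [hm'elems, hE, List.take_left' (by rw [List.length_take]; omega)]
  have hlabeq : ∀ k, k < p → lab m' k = lab ma k := hCL.1 m' ma p hm'take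
  have hma_asc' : ∀ k, j ≤ k → k + 2 ≤ p → lab ma k ≤ lab ma (k + 1) := by
    intro k h1 h2
    exact hma_asc k (by rw [hrlen]; omega) h2
  have hasc : RestrAscending lab m' a.length (a.length + c.length + 1) := by
    intro k h1 h2
    rw [hal] at h1
    rw [hal, hclen] at h2
    have hk2p : k + 2 ≤ p := by omega
    rw [hlabeq k (by omega), hlabeq (k + 1) (by omega)]
    exact hma_asc' k h1 hk2p
  have hchxy : List.Chain' (· ⋖ ·) (x :: (c ++ [y])) := by
    have h1 : List.Chain' (· ⋖ ·) (r ++ c ++ [y]) := htkp1 ▸ ma.chain'.take (p + 1)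
    rw [hr, show (a ++ [x]) ++ c ++ [y] = a ++ (x :: (c ++ [y])) by simp] at h1
    exact (List.isChain_append.mp h1).2.1
  have hpwxy : List.Pairwise (· < ·) (x :: (c ++ [y])) :=
    List.isChain_iff_pairwise.mp (hchxy.imp fun _ _ h => h.lt)
  have hwnot : w ∉ c := by
    intro hwc
    obtain ⟨c₁, c₂, hsp⟩ := List.append_of_mem hwc
    have hc2 : c₂ = [] := by
      cases c₂ with
      | nil => rfl
      | cons z c₂' =>
        exfalso
        have hre : x :: (c ++ [y]) = (x :: c₁ ++ [w]) ++ (z :: (c₂' ++ [y])) := by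
          rw [hsp]; simp
        have hwz : w ⋖ z := by
          have h1 := hchxy
          rw [hre] at h1
          obtain ⟨-, -, h3⟩ := List.isChain_append.mp h1
          exact h3 w (by rw [List.getLast?_concat]; rfl) z rfl
        have hzy : z < y := by
          have h1 := hpwxy
          rw [hre] at h1
          have h2 := (List.pairwise_append.mp h1).2.1
          exact (List.pairwise_cons.mp h2).1 y (by simp)
        exact hwy.2 hwz.lt hzy
    have hc1 : c₁ = [] := by
      cases c₁ with
      | nil => rfl
      | cons z c₁' =>
        exfalso
        have hre : x :: (c ++ [y]) = x :: z :: (c₁' ++ w :: c₂ ++ [y]) := by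
          rw [hsp]; simp
        have hxz : x ⋖ z := by
          have h1 := hchxy
          rw [hre] at h1
          exact (List.isChain_cons_cons.mp h1).1
        have hzw : z < w := by
          have h1 := hpwxy
          rw [hre] at h1
          have h2 := (List.pairwise_cons.mp h1).2
          exact (List.pairwise_cons.mp h2).1 w (by simp)
        exact hxw.2 hxz.lt hzw
    rw [hc1, hc2] at hsp
    simp at hsp
    have hpj : p = j + 2 := by
      rw [hsp] at hclen
      simp at hclen
      omega
    have htake3 : ma.elems.take (j + 2 + 1) = m.elems.take (j + 2 + 1) := by
      have h1 : ma.elems.take (j + 3) = a ++ [x, w, y] := by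
        rw [show j + 3 = p + 1 by omega, htkp1, hsp, hr]; simp
      have h2 : m.elems.take (j + 3) = a ++ [x, w, y] := by
        rw [hm, ← hal, List.take_length_add_append 3]; rfl
      exact h1.trans h2.symm
    have hlab2 : ∀ k, k < j + 2 → lab ma k = lab m k := hCL.1 ma m (j + 2) htake3
    have : lab m j ≤ lab m (j + 1) := by
      rw [← hlab2 j (by omega), ← hlab2 (j + 1) (by omega)]
      exact hma_asc' j (le_refl j) (by omega)
    exact hdes (by simpa using this)
  have hmove : PolygonMove lab m' m := by
    refine ⟨a, c, b, x, w, y, by rw [hm'elems, hEeq], hm, hcne, hwnot, hasc, ?_⟩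
    rw [hal]
    simpa using hdes
  exact ⟨m', hmove, by rw [fdiff_eq (by rw [hm'elems, hEeq]) hm hcne hwnot, hal]⟩


theorem maxchain_finite [Fintype P] : Finite (MaxChain P) := by
  have hfin : Finite {l : List P // l.length ≤ Fintype.card P} :=
    (List.finite_length_le P (Fintype.card P)).to_subtype
  exact Finite.of_injective
    (fun m : MaxChain P => (⟨m.elems, (mc_nodup m).length_le_card⟩ :
      {l : List P // l.length ≤ Fintype.card P}))
    (fun m m' h => MaxChain.ext' (congrArg Subtype.val h))

end Helpers

/-- the number of maximal chains covered by `m` in the maximal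
chain descent order is at most the number of descents of `m`; if `lab` is
polygon complete, these numbers are equal. -/
theorem statement6 [Fintype P] (lab : MaxChain P → ℕ → Λ) (hCL : IsCLLabeling lab)
    (m : MaxChain P) :
    {m' : MaxChain P | CDCovBy lab m' m}.ncard ≤
        {i : ℕ | DescentAt lab m i}.ncard ∧
      (PolygonComplete lab →
        {m' : MaxChain P | CDCovBy lab m' m}.ncard =
          {i : ℕ | DescentAt lab m i}.ncard) := by
  classical
  have hdfin : {i : ℕ | DescentAt lab m i}.Finite :=
    (Set.finite_Iio m.elems.length).subset (fun i hi => by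
      simp only [Set.mem_Iio]
      have := hi.2.1
      omega)
  have hle : {m' : MaxChain P | CDCovBy lab m' m}.ncard ≤ {i : ℕ | DescentAt lab m i}.ncard := by
    exact Set.ncard_le_ncard_of_injOn (fdiff m)
      (fun m' hm' => move_descent (cover_move hm'))
      (fun m₁ h₁ m₂ h₂ hf => move_unique hCL (cover_move h₁) (cover_move h₂) hf)
      hdfin
  refine ⟨hle, fun hPC => le_antisymm hle ?_⟩
  haveI : Finite (MaxChain P) := maxchain_finite
  set g : ℕ → MaxChain P := fun i =>
    if h : DescentAt lab m i then (descent_move hCL h).choose else m with hg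
  have hgspec : ∀ i, DescentAt lab m i → PolygonMove lab (g i) m ∧ fdiff m (g i) = i := by
    intro i hi
    rw [hg]
    simp only [dif_pos hi]
    exact (descent_move hCL hi).choose_spec
  refine Set.ncard_le_ncard_of_injOn g
    (fun i hi => hPC _ _ (hgspec i hi).1) ?_ (Set.toFinite _)
  intro i₁ h₁ i₂ h₂ hgeq
  have e1 := (hgspec i₁ h₁).2
  have e2 := (hgspec i₂ h₂).2
  rw [← e1, ← e2, hgeq]
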